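/- arXiv:2509.05545 — 3 statements merged into one kernel-verified Lean document; each statement's English description precedes it below -/
import Mathlib

section
/- Let S be a type, d : S → S → ℝ a function satisfying the triangle inequality d(x,z) ≤ d(x,y) + d(y,z), and set V*(x,y) = -d(x,y). Fix states s_i, s_j, ŝ in S and margins c_prog > 0 and c_nontrivial > 0. If the three loss terms vanish, i.e., max(0, V*(s_i,s_j) - V*(s_i,ŝ) - V*(ŝ,s_j)) = 0, max(0, c_prog + V*(s_i,ŝ)) = 0, and max(0, c_nontrivial + V*(ŝ,s_j)) = 0, then (1) V*(s_i,s_j) = V*(s_i,ŝ) + V*(ŝ,s_j), equivalently d(s_i,ŝ) + d(ŝ,s_j) = d(s_i,s_j); (2) d(s_i,ŝ) ≥ c_prog; and (3) d(ŝ,s_j) ≥ c_nontrivial. -/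
theorem anticipation_loss_zero_characterization_general {S : Type*} (d : S → S → ℝ)
    (htri : ∀ x y z, d x z ≤ d x y + d y z)
    (V : S → S → ℝ) (hV : ∀ x y, V x y = -d x y)
    (s_i s_j shat : S) (c_prog c_nontrivial : ℝ)
    (h_detour : max 0 (V s_i s_j - V s_i shat - V shat s_j) = 0)
    (h_prog : max 0 (c_prog + V s_i shat) = 0)
    (h_nontrivial : max 0 (c_nontrivial + V shat s_j) = 0) :
    (V s_i s_j = V s_i shat + V shat s_j ∧ d s_i shat + d shat s_j = d s_i s_j) ∧
    d s_i shat ≥ c_prog ∧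
    d shat s_j ≥ c_nontrivial := by
  have hdetour := max_eq_left_iff.mp h_detour
  have hprog := max_eq_left_iff.mp h_prog
  have hnontrivial := max_eq_left_iff.mp h_nontrivial
  simp only [hV] at hdetour hprog hnontrivial ⊢
  have hpath : d s_i shat + d shat s_j = d s_i s_j :=
    le_antisymm (by linarith) (htri s_i shat s_j)
  exact ⟨⟨by linarith, hpath⟩, by linarith, by linarith⟩

/-- Characterization of the global minimum of the regularized
anticipation loss. If all three ReLU loss terms vanish, then the subgoal `shat`
lies exactly on a shortest path (value additivity / distance additivity), is at
distance at least `c_prog` from the start, and at distance at least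
`c_nontrivial` from the goal. -/
theorem anticipation_loss_zero_characterization {S : Type*} (d : S → S → ℝ)
    (htri : ∀ x y z, d x z ≤ d x y + d y z)
    (V : S → S → ℝ) (hV : ∀ x y, V x y = -d x y)
    (s_i s_j shat : S) (c_prog c_nontrivial : ℝ)
    (hcp : 0 < c_prog) (hcn : 0 < c_nontrivial)
    (h_detour : max 0 (V s_i s_j - V s_i shat - V shat s_j) = 0)
    (h_prog : max 0 (c_prog + V s_i shat) = 0)
    (h_nontrivial : max 0 (c_nontrivial + V shat s_j) = 0) :
    (V s_i s_j = V s_i shat + V shat s_j ∧ d s_i shat + d shat s_j = d s_i s_j) ∧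
    d s_i shat ≥ c_prog ∧
    d shat s_j ≥ c_nontrivial :=
  anticipation_loss_zero_characterization_general d htri V hV s_i s_j shat c_prog c_nontrivial
    h_detour h_prog h_nontrivial
end

section
/- Let S be a type, d : S → S → ℝ a function satisfying the triangle inequality, V*(x,y) = -d(x,y), and Vω : S → S → ℝ a function with |Vω(x,y) - V*(x,y)| ≤ ε_V for all x, y, where ε_V ≥ 0. Fix states s, g, ŝ and suppose the anticipation loss bound max(0, Vω(s,g) - Vω(s,ŝ) - Vω(ŝ,g)) ≤ ε_ψ holds for some ε_ψ ≥ 0. Then the true detour cost is bounded: d(s,ŝ) + d(ŝ,g) - d(s,g) ≤ 3ε_V + ε_ψ. -/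
/-! The detour cost is exactly the anticipation loss measured with `V* = -d`. Each of its three
terms is within `ε_V` of the corresponding term measured with `Vω`, so it exceeds the loss of `Vω`,
itself at most `ε_ψ`, by at most `3 ε_V`. -/

theorem sub_sub_le_sub_sub_add_of_abs_sub_le {S : Type*} {V W : S → S → ℝ} {ε : ℝ}
    (h : ∀ x y, |V x y - W x y| ≤ ε) (s m g : S) :
    W s g - W s m - W m g ≤ V s g - V s m - V m g + 3 * ε := by
  have hsg := abs_sub_le_iff.mp (h s g)
  have hsm := abs_sub_le_iff.mp (h s m)
  have hmg := abs_sub_le_iff.mp (h m g)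
  linarith [hsg.2, hsm.1, hmg.1]

theorem bounded_detour_general {S : Type*} (d : S → S → ℝ)
    (Vstar Vω : S → S → ℝ) (hVstar : ∀ x y, Vstar x y = -d x y)
    (εV εψ : ℝ)
    (happrox : ∀ x y, |Vω x y - Vstar x y| ≤ εV)
    (s g shat : S)
    (hloss : max 0 (Vω s g - Vω s shat - Vω shat g) ≤ εψ) :
    d s shat + d shat g - d s g ≤ 3 * εV + εψ :=
  calc d s shat + d shat g - d s g = Vstar s g - Vstar s shat - Vstar shat g := by
        simp only [hVstar]; ring
    _ ≤ Vω s g - Vω s shat - Vω shat g + 3 * εV :=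
        sub_sub_le_sub_sub_add_of_abs_sub_le happrox s shat g
    _ ≤ εψ + 3 * εV := by grw [(le_max_right _ _).trans hloss]
    _ = 3 * εV + εψ := add_comm _ _

/-- Bounded Detour of Anticipated Subgoals (Lemma 4).
If `Vω` approximates `V* = -d` uniformly within `ε_V` and the anticipation loss
of the subgoal `shat` is at most `ε_ψ`, then the true detour cost is at most
`3ε_V + ε_ψ`. -/
theorem bounded_detour {S : Type*} (d : S → S → ℝ)
    (htri : ∀ x y z, d x z ≤ d x y + d y z)
    (Vstar Vω : S → S → ℝ) (hVstar : ∀ x y, Vstar x y = -d x y)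
    (εV εψ : ℝ) (hεV : 0 ≤ εV) (hεψ : 0 ≤ εψ)
    (happrox : ∀ x y, |Vω x y - Vstar x y| ≤ εV)
    (s g shat : S)
    (hloss : max 0 (Vω s g - Vω s shat - Vω shat g) ≤ εψ) :
    d s shat + d shat g - d s g ≤ 3 * εV + εψ :=
  bounded_detour_general d Vstar Vω hVstar εV εψ happrox s g shat hloss
end

section
/- Let S be a type, d : S → S → ℝ a function satisfying d(x,x) = 0 and the triangle inequality, and Vω : S → S → ℝ with |Vω(x,y) + d(x,y)| ≤ ε_V for all x, y, where ε_V ≥ 0. Let g ∈ S, let s_0, s_1, ..., s_M be states with s_M = g, and suppose for each k ≤ M-1: (i) the anticipation loss bound max(0, Vω(s_k,g) - Vω(s_k,s_{k+1}) - Vω(s_{k+1},g)) ≤ ε_ψ holds, and (ii) the cost C_k ∈ ℝ incurred traveling from s_k to s_{k+1} satisfies C_k ≤ d(s_k,s_{k+1}) + ε_π, for constants ε_ψ, ε_π ≥ 0. Then the total cost satisfies Σ_{k=0}^{M-1} C_k ≤ d(s_0, g) + M·(ε_π + 3ε_V + ε_ψ). -/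
/-!
Since `Vω` is `εV`-close to `-d`, an anticipation loss at most `εψ` at step `k` says that
`s (k + 1)` lies almost on a shortest path from `s k` to `g`:
`d (s k) (s (k + 1)) ≤ d (s k) g - d (s (k + 1)) g + 3 εV + εψ`.
Adding `επ` bounds `C k`, and summing telescopes to `d (s 0) g - d g g = d (s 0) g`.
-/

open Finset

theorem Finset.sum_range_le_sub_add_mul_of_le_sub_succ {α : Type*} [Ring α] [PartialOrder α]
    [IsOrderedRing α] {M : ℕ} {u f : ℕ → α} {c : α}
    (h : ∀ k < M, u k ≤ f k - f (k + 1) + c) :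
    ∑ k ∈ range M, u k ≤ f 0 - f M + M * c :=
  calc ∑ k ∈ range M, u k ≤ ∑ k ∈ range M, (f k - f (k + 1) + c) :=
        sum_le_sum fun k hk => h k (mem_range.mp hk)
    _ = f 0 - f M + M * c := by
        rw [sum_add_distrib, sum_range_sub', sum_const, card_range, nsmul_eq_mul]

theorem le_sub_add_of_abs_add_le_of_anticipation_le {S : Type*} {d V : S → S → ℝ} {εV εψ : ℝ}
    (happrox : ∀ x y, |V x y + d x y| ≤ εV) {a b g : S}
    (hloss : V a g - V a b - V b g ≤ εψ) :
    d a b ≤ d a g - d b g + (3 * εV + εψ) := by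
  have hab := abs_le.mp (happrox a b)
  have hag := abs_le.mp (happrox a g)
  have hbg := abs_le.mp (happrox b g)
  linarith [hab.1, hag.2, hbg.2]

theorem bounded_suboptimality_RLA_general {S : Type*} (d : S → S → ℝ)
    (hd0 : ∀ x, d x x = 0)
    (Vω : S → S → ℝ) (εV : ℝ)
    (happrox : ∀ x y, |Vω x y + d x y| ≤ εV)
    (M : ℕ) (s : ℕ → S) (g : S) (hend : s M = g)
    (C : ℕ → ℝ) (εψ επ : ℝ)
    (hloss : ∀ k, k ≤ M - 1 → k < M →
      max 0 (Vω (s k) g - Vω (s k) (s (k + 1)) - Vω (s (k + 1)) g) ≤ εψ)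
    (hcost : ∀ k, k ≤ M - 1 → k < M → C k ≤ d (s k) (s (k + 1)) + επ) :
    ∑ k ∈ Finset.range M, C k ≤ d (s 0) g + M * (επ + 3 * εV + εψ) := by
  have hstep : ∀ k < M, C k ≤ d (s k) g - d (s (k + 1)) g + (επ + 3 * εV + εψ) := by
    intro k hk
    have hk' := Nat.le_sub_one_of_lt hk
    have hd := le_sub_add_of_abs_add_le_of_anticipation_le happrox
      ((le_max_right _ _).trans (hloss k hk' hk))
    linarith [hcost k hk' hk]
  calc ∑ k ∈ range M, C k ≤ d (s 0) g - d (s M) g + M * (επ + 3 * εV + εψ) :=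
        sum_range_le_sub_add_mul_of_le_sub_succ hstep
    _ = d (s 0) g + M * (επ + 3 * εV + εψ) := by rw [hend, hd0, sub_zero]

/-- Bounded Sub-optimality of RLA (Theorem 2).
With `Vω` uniformly `ε_V`-close to `-d`, anticipation loss at most `ε_ψ` at
every high-level step, and per-segment cost at most the shortest-path distance
plus `ε_π`, the total cost is at most `d(s_0,g) + M·(ε_π + 3ε_V + ε_ψ)`. -/
theorem bounded_suboptimality_RLA {S : Type*} (d : S → S → ℝ)
    (hd0 : ∀ x, d x x = 0)
    (htri : ∀ x y z, d x z ≤ d x y + d y z)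
    (Vω : S → S → ℝ) (εV : ℝ) (hεV : 0 ≤ εV)
    (happrox : ∀ x y, |Vω x y + d x y| ≤ εV)
    (M : ℕ) (s : ℕ → S) (g : S) (hend : s M = g)
    (C : ℕ → ℝ) (εψ επ : ℝ) (hεψ : 0 ≤ εψ) (hεπ : 0 ≤ επ)
    (hloss : ∀ k, k ≤ M - 1 → k < M →
      max 0 (Vω (s k) g - Vω (s k) (s (k + 1)) - Vω (s (k + 1)) g) ≤ εψ)
    (hcost : ∀ k, k ≤ M - 1 → k < M → C k ≤ d (s k) (s (k + 1)) + επ) :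
    ∑ k ∈ Finset.range M, C k ≤ d (s 0) g + M * (επ + 3 * εV + εψ) :=
  bounded_suboptimality_RLA_general d hd0 Vω εV happrox M s g hend C εψ επ hloss hcost
end
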